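/- Let Ω ⊂ (0,∞)×ℝ be a measurable set and Ω̂ := {(x,y,z) ∈ ℝ³ : (√(x²+y²), z) ∈ Ω} its solid of revolution. Let v = (v_r,v_z) be a C¹ vector field on (0,∞)×ℝ and q : (0,∞)×ℝ → ℝ measurable such that (r,z) ↦ |q(r,z)|·| ∂_r( r v_r ) + ∂_z( r v_z ) |(r,z) is Lebesgue-integrable on Ω. Define q̂(x,y,z) := q(√(x²+y²), z). Then ∫_{Ω̂} q̂ · div v̂ dx dy dz = 2π · ∫_Ω q · ( ∂_r( r v_r ) + ∂_z( r v_z ) ) dr dz, i.e. the three-dimensional form ∫ q̂ div v̂ equals 2π times the axisymmetric form b(q,v) = ∫_Ω q · div( r v ) dr dz. -/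

import Mathlib

open MeasureTheory

noncomputable section

/-- Partial derivatives of scalar functions on `ℝ²`. -/
def pdr (f : ℝ × ℝ → ℝ) (p : ℝ × ℝ) : ℝ := fderiv ℝ f p (1, 0)
def pdz (f : ℝ × ℝ → ℝ) (p : ℝ × ℝ) : ℝ := fderiv ℝ f p (0, 1)

/-- Partial derivatives of scalar functions on `ℝ³ = ℝ × ℝ × ℝ`. -/
def pdx3 (f : ℝ × ℝ × ℝ → ℝ) (q : ℝ × ℝ × ℝ) : ℝ := fderiv ℝ f q (1, 0, 0)
def pdy3 (f : ℝ × ℝ × ℝ → ℝ) (q : ℝ × ℝ × ℝ) : ℝ := fderiv ℝ f q (0, 1, 0)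
def pdz3 (f : ℝ × ℝ × ℝ → ℝ) (q : ℝ × ℝ × ℝ) : ℝ := fderiv ℝ f q (0, 0, 1)

/-- The divergence of a vector field on `ℝ³`. -/
def div3 (F : ℝ × ℝ × ℝ → ℝ × ℝ × ℝ) (q : ℝ × ℝ × ℝ) : ℝ :=
  pdx3 (fun s => (F s).1) q + pdy3 (fun s => (F s).2.1) q + pdz3 (fun s => (F s).2.2) q

/-- The revolved vector field `v̂` on `ℝ³` associated with the meridian field `(v_r, v_z)`. -/
def revolve (vr vz : ℝ × ℝ → ℝ) (q : ℝ × ℝ × ℝ) : ℝ × ℝ × ℝ :=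
  (vr (Real.sqrt (q.1 ^ 2 + q.2.1 ^ 2), q.2.2) * q.1 / Real.sqrt (q.1 ^ 2 + q.2.1 ^ 2),
   vr (Real.sqrt (q.1 ^ 2 + q.2.1 ^ 2), q.2.2) * q.2.1 / Real.sqrt (q.1 ^ 2 + q.2.1 ^ 2),
   vz (Real.sqrt (q.1 ^ 2 + q.2.1 ^ 2), q.2.2))

/-- The solid of revolution of a meridian set `Ω ⊆ (0,∞) × ℝ`. -/
def solidRev (Ω : Set (ℝ × ℝ)) : Set (ℝ × ℝ × ℝ) :=
  {q : ℝ × ℝ × ℝ | (Real.sqrt (q.1 ^ 2 + q.2.1 ^ 2), q.2.2) ∈ Ω}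

/-!
Write `ρ = √(x² + y²)` and `meridian (x, y, z) = (ρ, z)`. The horizontal part of `v̂` is the
radial field `(v_r / r)(ρ, z) · (x, y)`, whose planar divergence is `ρ ∂_r (v_r / r) + 2 v_r / ρ`;
hence `div v̂ = ρ⁻¹ (∂_r (r v_r) + ∂_z (r v_z))` at `(ρ, z)` wherever `ρ > 0`. The integrand
`q̂ div v̂` is therefore a function of the meridian point, and in cylindrical coordinates
`(r, θ, z)` the Jacobian `r` cancels `ρ⁻¹` while the angle contributes the factor `2π`.
-/

open Real Set

def meridian (w : ℝ × ℝ × ℝ) : ℝ × ℝ := (√(w.1 ^ 2 + w.2.1 ^ 2), w.2.2)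

theorem ContinuousLinearMap.apply_prod_eq_smul_add {R M : Type*} [Semiring R] [TopologicalSpace R]
    [AddCommMonoid M] [Module R M] [TopologicalSpace M] (L : R × R →L[R] M) (a b : R) :
    L (a, b) = a • L (1, 0) + b • L (0, 1) := by
  rw [← L.map_smul, ← L.map_smul, ← map_add]
  simp

theorem exists_hasFDerivAt_meridian {w : ℝ × ℝ × ℝ} (hw : 0 < (meridian w).1) :
    ∃ L : ℝ × ℝ × ℝ →L[ℝ] ℝ × ℝ, HasFDerivAt meridian L w ∧
      ∀ a b c, L (a, b, c) = ((a * w.1 + b * w.2.1) / (meridian w).1, c) := by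
  have hx : HasFDerivAt (fun s : ℝ × ℝ × ℝ => s.1) (ContinuousLinearMap.fst ℝ ℝ (ℝ × ℝ)) w :=
    hasFDerivAt_fst
  have hy : HasFDerivAt (fun s : ℝ × ℝ × ℝ => s.2.1)
      ((ContinuousLinearMap.fst ℝ ℝ ℝ).comp (ContinuousLinearMap.snd ℝ ℝ (ℝ × ℝ))) w :=
    hasFDerivAt_snd.fst
  refine ⟨_, (((hx.pow 2).add (hy.pow 2)).sqrt (sqrt_pos.1 hw).ne').prodMk hasFDerivAt_snd.snd,
    fun a b c => ?_⟩
  simp [meridian, field]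

theorem differentiableAt_meridian {w : ℝ × ℝ × ℝ} (hw : 0 < (meridian w).1) :
    DifferentiableAt ℝ meridian w :=
  let ⟨_, hL, _⟩ := exists_hasFDerivAt_meridian hw
  hL.differentiableAt

theorem fderiv_comp_meridian_apply {g : ℝ × ℝ → ℝ} {w : ℝ × ℝ × ℝ}
    (hg : DifferentiableAt ℝ g (meridian w)) (hw : 0 < (meridian w).1) (a b c : ℝ) :
    fderiv ℝ (fun s => g (meridian s)) w (a, b, c) =
      (a * w.1 + b * w.2.1) / (meridian w).1 * pdr g (meridian w) + c * pdz g (meridian w) := by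
  obtain ⟨L, hL, hLapply⟩ := exists_hasFDerivAt_meridian hw
  change fderiv ℝ (g ∘ meridian) w (a, b, c) = _
  rw [(hg.hasFDerivAt.comp w hL).fderiv, ContinuousLinearMap.comp_apply, hLapply,
    ContinuousLinearMap.apply_prod_eq_smul_add, pdr, pdz, smul_eq_mul, smul_eq_mul]

theorem pdz3_comp_meridian {g : ℝ × ℝ → ℝ} {w : ℝ × ℝ × ℝ}
    (hg : DifferentiableAt ℝ g (meridian w)) (hw : 0 < (meridian w).1) :
    pdz3 (fun s => g (meridian s)) w = pdz g (meridian w) := by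
  simp [pdz3, fderiv_comp_meridian_apply hg hw]

theorem pdx3_add_pdy3_radial {u : ℝ × ℝ → ℝ} {w : ℝ × ℝ × ℝ}
    (hu : DifferentiableAt ℝ u (meridian w)) (hw : 0 < (meridian w).1) :
    pdx3 (fun s => u (meridian s) * s.1) w + pdy3 (fun s => u (meridian s) * s.2.1) w
      = (meridian w).1 * pdr u (meridian w) + 2 * u (meridian w) := by
  have hum : DifferentiableAt ℝ (fun s => u (meridian s)) w :=
    hu.comp w (differentiableAt_meridian hw)
  have hρ : (meridian w).1 ^ 2 = w.1 ^ 2 + w.2.1 ^ 2 := sq_sqrt (by positivity)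
  rw [pdx3, pdy3, (hum.hasFDerivAt.fun_mul (hasFDerivAt_fst (𝕜 := ℝ) (p := w))).fderiv,
    (hum.hasFDerivAt.fun_mul (hasFDerivAt_snd (𝕜 := ℝ) (p := w)).fst).fderiv]
  simp only [add_apply, smul_apply, ContinuousLinearMap.coe_fst', smul_eq_mul, mul_one,
    fderiv_comp_meridian_apply hu hw, one_mul, zero_mul, add_zero, ContinuousLinearMap.comp_apply,
    ContinuousLinearMap.coe_snd', zero_add]
  field_simp
  linear_combination -pdr u (meridian w) * hρ

theorem pdr_fst_mul {f : ℝ × ℝ → ℝ} {p : ℝ × ℝ} (hf : DifferentiableAt ℝ f p) :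
    pdr (fun s => s.1 * f s) p = f p + p.1 * pdr f p := by
  simp only [pdr, (hasFDerivAt_fst.fun_mul hf.hasFDerivAt).fderiv]
  simp only [add_apply, smul_apply, smul_eq_mul, ContinuousLinearMap.coe_fst', mul_one]
  ring

theorem pdz_fst_mul {f : ℝ × ℝ → ℝ} {p : ℝ × ℝ} (hf : DifferentiableAt ℝ f p) :
    pdz (fun s => s.1 * f s) p = p.1 * pdz f p := by
  simp only [pdz, (hasFDerivAt_fst.fun_mul hf.hasFDerivAt).fderiv]
  simp

theorem pdr_mul_fst_inv {f : ℝ × ℝ → ℝ} {p : ℝ × ℝ} (hf : DifferentiableAt ℝ f p)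
    (hp : p.1 ≠ 0) : pdr (fun s => f s * s.1⁻¹) p = pdr f p / p.1 - f p / p.1 ^ 2 := by
  have hinv : HasFDerivAt (fun s : ℝ × ℝ => s.1⁻¹) _ p := (hasFDerivAt_inv hp).comp p hasFDerivAt_fst
  simp only [pdr, (hf.hasFDerivAt.fun_mul hinv).fderiv]
  simp only [add_apply, smul_apply, ContinuousLinearMap.comp_apply, ContinuousLinearMap.coe_fst',
    ContinuousLinearMap.toSpanSingleton_apply, smul_eq_mul, mul_neg, one_mul]
  field_simp
  ring

theorem div3_revolve {vr vz : ℝ × ℝ → ℝ} {w : ℝ × ℝ × ℝ}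
    (hvr : DifferentiableAt ℝ vr (meridian w)) (hvz : DifferentiableAt ℝ vz (meridian w))
    (hw : 0 < (meridian w).1) :
    div3 (revolve vr vz) w = (meridian w).1⁻¹ *
      (pdr (fun s => s.1 * vr s) (meridian w) + pdz (fun s => s.1 * vz s) (meridian w)) := by
  have hrevolve : revolve vr vz = fun s =>
      (vr (meridian s) * (meridian s).1⁻¹ * s.1, vr (meridian s) * (meridian s).1⁻¹ * s.2.1,
        vz (meridian s)) := by
    funext s
    simp only [revolve, meridian, Prod.mk.injEq]
    exact ⟨by ring, by ring, trivial⟩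
  have hu : DifferentiableAt ℝ (fun p => vr p * p.1⁻¹) (meridian w) :=
    hvr.mul (differentiableAt_fst.inv hw.ne')
  rw [div3, hrevolve]
  dsimp only
  rw [pdx3_add_pdy3_radial hu hw, pdz3_comp_meridian hvz hw, pdr_mul_fst_inv hvr hw.ne',
    pdr_fst_mul hvr, pdz_fst_mul hvz]
  field_simp
  ring

section Integration

variable {E : Type*} [NormedAddCommGroup E] [NormedSpace ℝ E]

theorem integral_prod_smul_middle {α β γ 𝕜 : Type*} [MeasurableSpace α] [MeasurableSpace β]
    [MeasurableSpace γ] [RCLike 𝕜] [NormedSpace 𝕜 E] {μ : Measure α} {ν : Measure β}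
    {τ : Measure γ} [SFinite μ] [SFinite ν] [SFinite τ] (φ : β → 𝕜) (h : α × γ → E) :
    ∫ x, φ x.1.2 • h (x.1.1, x.2) ∂(μ.prod ν).prod τ = (∫ b, φ b ∂ν) • ∫ p, h p ∂μ.prod τ := by
  let e : (α × β) × γ ≃ᵐ β × α × γ :=
    (MeasurableEquiv.prodComm.prodCongr (MeasurableEquiv.refl γ)).trans MeasurableEquiv.prodAssoc
  have he : MeasurePreserving e ((μ.prod ν).prod τ) (ν.prod (μ.prod τ)) :=
    (Measure.measurePreserving_swap.prod (MeasurePreserving.id τ)).trans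
      (measurePreserving_prodAssoc ν μ τ)
  rw [← integral_prod_smul, ← he.integral_comp']
  rfl

theorem integral_comp_polarCoord_prod_symm (f : (ℝ × ℝ) × ℝ → E) :
    ∫ x in polarCoord.target ×ˢ univ, x.1.1 • f (polarCoord.symm x.1, x.2) = ∫ x, f x := by
  let e := polarCoord.prod (OpenPartialHomeomorph.refl ℝ)
  have he : e.symm '' e.target =ᵐ[volume] (univ : Set ((ℝ × ℝ) × ℝ)) := by
    rw [e.symm_image_target_eq_source, ← univ_prod_univ]
    exact Measure.set_prod_ae_eq polarCoord_source_ae_eq_univ .rfl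
  have hderiv : ∀ x, HasFDerivAt e.symm
      ((fderivPolarCoordSymm x.1).prodMap (ContinuousLinearMap.id ℝ ℝ)) x :=
    fun x => (hasFDerivAt_polarCoord_symm x.1).prodMap x (hasFDerivAt_id x.2)
  have hdet : ∀ x : (ℝ × ℝ) × ℝ,
      ((fderivPolarCoordSymm x.1).prodMap (ContinuousLinearMap.id ℝ ℝ)).det = x.1.1 := by
    intro x
    rw [ContinuousLinearMap.det, ContinuousLinearMap.coe_prodMap, LinearMap.det_prodMap,
      ContinuousLinearMap.coe_id, LinearMap.det_id, mul_one, ← ContinuousLinearMap.det,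
      det_fderivPolarCoordSymm]
  have : (volume : Measure ((ℝ × ℝ) × ℝ)).IsAddHaarMeasure := Measure.prod.instIsAddHaarMeasure _ _
  symm
  rw [← setIntegral_univ, ← setIntegral_congr_set he,
    integral_image_eq_integral_abs_det_fderiv_smul volume e.open_target.measurableSet
      (fun x _ => (hderiv x).hasFDerivWithinAt) e.symm.injOn]
  refine setIntegral_congr_fun e.open_target.measurableSet fun x hx => ?_
  rw [hdet, abs_of_pos hx.1.1]
  rfl

theorem solidRev_eq_preimage (Ω : Set (ℝ × ℝ)) : solidRev Ω = meridian ⁻¹' Ω := rfl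

theorem measurable_meridian : Measurable meridian := by
  unfold meridian
  fun_prop

theorem meridian_polarCoord_symm {p : ℝ × ℝ} (hp : 0 ≤ p.1) (z : ℝ) :
    meridian ((polarCoord.symm p).1, (polarCoord.symm p).2, z) = (p.1, z) := by
  simp [meridian, polarCoord_symm_apply, mul_pow, ← mul_add, sqrt_sq hp]

theorem integral_solidRev_comp_meridian {Ω : Set (ℝ × ℝ)} (hΩm : MeasurableSet Ω)
    (hΩ : Ω ⊆ {p | 0 < p.1}) (g : ℝ × ℝ → E) :
    ∫ w in solidRev Ω, g (meridian w) = (2 * π) • ∫ p in Ω, p.1 • g p := by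
  have hpolar : ∀ x : (ℝ × ℝ) × ℝ,
      (polarCoord.target ×ˢ univ).indicator (fun x => x.1.1 • Ω.indicator g (x.1.1, x.2)) x =
        (Ioo (-π) π).indicator (1 : ℝ → ℝ) x.1.2 • (x.1.1 • Ω.indicator g (x.1.1, x.2)) := by
    rintro ⟨⟨r, θ⟩, z⟩
    -- the condition `0 < r` of the polar target is automatic on `Ω`
    by_cases hrz : (r, z) ∈ Ω
    · have hr : 0 < r := hΩ hrz
      by_cases hθ : θ ∈ Ioo (-π) π <;> simp [indicator, polarCoord_target, hr, hθ, hrz]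
    · simp [hrz]
  calc ∫ w in solidRev Ω, g (meridian w)
      = ∫ w, Ω.indicator g (meridian w) := by
        rw [solidRev_eq_preimage, ← integral_indicator (measurable_meridian hΩm)]
        rfl
    _ = ∫ x : (ℝ × ℝ) × ℝ, Ω.indicator g (meridian (MeasurableEquiv.prodAssoc x)) :=
        (volume_preserving_prodAssoc.integral_comp' _).symm
    _ = ∫ x in polarCoord.target ×ˢ univ, x.1.1 • Ω.indicator g (x.1.1, x.2) := by
        rw [← integral_comp_polarCoord_prod_symm]
        refine setIntegral_congr_fun (polarCoord.open_target.measurableSet.prod .univ)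
          fun x hx => ?_
        rw [← meridian_polarCoord_symm hx.1.1.le x.2]
        rfl
    _ = ∫ x : (ℝ × ℝ) × ℝ,
          (Ioo (-π) π).indicator (1 : ℝ → ℝ) x.1.2 • (x.1.1 • Ω.indicator g (x.1.1, x.2)) := by
        rw [← integral_indicator (polarCoord.open_target.measurableSet.prod .univ)]
        simp_rw [hpolar]
    _ = (∫ θ, (Ioo (-π) π).indicator (1 : ℝ → ℝ) θ) • ∫ p, p.1 • Ω.indicator g p :=
        integral_prod_smul_middle _ (fun p => p.1 • Ω.indicator g p)
    _ = (2 * π) • ∫ p in Ω, p.1 • g p := by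
        rw [integral_indicator_one measurableSet_Ioo, ← integral_indicator hΩm,
          Real.volume_real_Ioo_of_le (by linarith [pi_pos])]
        simp_rw [indicator_smul_apply, sub_neg_eq_add, ← two_mul]

end Integration

theorem integral_pressure_div_revolved_general
    (Ω : Set (ℝ × ℝ)) (hΩm : MeasurableSet Ω) (hΩ : Ω ⊆ {p : ℝ × ℝ | 0 < p.1})
    (vr vz : ℝ × ℝ → ℝ)
    (hv : ContDiffOn ℝ 1 (fun p => (vr p, vz p)) {p : ℝ × ℝ | 0 < p.1})
    (q : ℝ × ℝ → ℝ) :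
    ∫ w in solidRev Ω, q (Real.sqrt (w.1 ^ 2 + w.2.1 ^ 2), w.2.2) * div3 (revolve vr vz) w
      = (2 * Real.pi) *
        ∫ p in Ω, q p * (pdr (fun s => s.1 * vr s) p + pdz (fun s => s.1 * vz s) p) := by
  have hdiff : ∀ p : ℝ × ℝ, 0 < p.1 → DifferentiableAt ℝ vr p ∧ DifferentiableAt ℝ vz p := by
    intro p hp
    have h := (hv.differentiableOn one_ne_zero).differentiableAt
      ((isOpen_lt continuous_const continuous_fst).mem_nhds hp)
    exact ⟨h.fst, h.snd⟩
  set D : ℝ × ℝ → ℝ := fun p => pdr (fun s => s.1 * vr s) p + pdz (fun s => s.1 * vz s) p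
  calc ∫ w in solidRev Ω, q (meridian w) * div3 (revolve vr vz) w
      = ∫ w in solidRev Ω, (meridian w).1⁻¹ * (q (meridian w) * D (meridian w)) := by
        refine setIntegral_congr_fun (measurable_meridian hΩm) fun w hw => ?_
        have hr : 0 < (meridian w).1 := hΩ hw
        rw [div3_revolve (hdiff _ hr).1 (hdiff _ hr).2 hr]
        ring
    _ = (2 * π) * ∫ p in Ω, p.1 * (p.1⁻¹ * (q p * D p)) :=
        integral_solidRev_comp_meridian hΩm hΩ fun p => p.1⁻¹ * (q p * D p)
    _ = (2 * π) * ∫ p in Ω, q p * D p := by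
        congr 1
        refine setIntegral_congr_fun hΩm fun p hp => ?_
        exact mul_inv_cancel_left₀ (hΩ hp).ne' _

/-- `∫_{Ω̂} q̂ · div v̂ = 2π ∫_Ω q · (∂_r (r v_r) + ∂_z (r v_z))`, i.e. the
three-dimensional pressure-divergence pairing of the revolved data equals `2π` times the
axisymmetric bilinear form `b(q, v) = ∫_Ω q · div(r v)`. -/
theorem integral_pressure_div_revolved
    (Ω : Set (ℝ × ℝ)) (hΩm : MeasurableSet Ω) (hΩ : Ω ⊆ {p : ℝ × ℝ | 0 < p.1})
    (vr vz : ℝ × ℝ → ℝ)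
    (hv : ContDiffOn ℝ 1 (fun p => (vr p, vz p)) {p : ℝ × ℝ | 0 < p.1})
    (q : ℝ × ℝ → ℝ) (hq : Measurable q)
    (hint : IntegrableOn
      (fun p : ℝ × ℝ => |q p| *
        |pdr (fun s => s.1 * vr s) p + pdz (fun s => s.1 * vz s) p|) Ω volume) :
    ∫ w in solidRev Ω, q (Real.sqrt (w.1 ^ 2 + w.2.1 ^ 2), w.2.2) * div3 (revolve vr vz) w
      = (2 * Real.pi) *
        ∫ p in Ω, q p * (pdr (fun s => s.1 * vr s) p + pdz (fun s => s.1 * vz s) p) :=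
  integral_pressure_div_revolved_general Ω hΩm hΩ vr vz hv q
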